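/- arXiv:quant-ph/0301032 — 2 statements merged into one kernel-verified Lean document; each statement's English description precedes it below -/
import Mathlib

section
/- Let H_S, H_B be finite-dimensional Hilbert spaces and let H = H_S ⊗ I_B + I_S ⊗ H_B + ∑_α S_α ⊗ B_α be a Hamiltonian on H_S ⊗ H_B. Suppose H̃ ⊆ H_S is a subspace such that S_α |k⟩ = c_α |k⟩ for all α and all |k⟩ ∈ H̃ (with constants c_α independent of |k⟩), and H_S leaves H̃ invariant. Then for any |ψ⟩ ∈ H̃ and |μ⟩ ∈ H_B, exp(-iHt)(|ψ⟩ ⊗ |μ⟩) = (exp(-iH_S t)|ψ⟩) ⊗ (exp(-iH_c t)|μ⟩), where H_c = H_B + ∑_α c_α B_α. -/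
/-!
Let `W = H̃ ⊗ H_B` be the span of the product vectors `k ⊗ w` with `k ∈ H̃`. Because every `S_α`
acts on `H̃` as the scalar `c_α`, the Hamiltonian `H` agrees on `W` with the decoupled Hamiltonian
`H' = H_S ⊗ 1 + 1 ⊗ H_c`, and `H'` leaves `W` invariant since `H_S` leaves `H̃` invariant. Hence
`Hʲ` and `H'ʲ` agree on `W` for every `j`, so do the exponential series, and
`exp(-iH't) = exp(-iH_S t) ⊗ exp(-iH_c t)` because the two summands of `H'` commute.
-/

open Kronecker Matrix NormedSpace

namespace Matrix

variable {l m n p R : Type*}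

def kroneckerVec [Mul R] (x : l → R) (y : n → R) : l × n → R := fun i => x i.1 * y i.2

infixl:100 " ⊗ᵥ " => Matrix.kroneckerVec

theorem kronecker_mulVec_kroneckerVec [Fintype m] [Fintype p] [CommSemiring R]
    (A : Matrix l m R) (B : Matrix n p R) (x : m → R) (y : p → R) :
    (A ⊗ₖ B) *ᵥ (x ⊗ᵥ y) = (A *ᵥ x) ⊗ᵥ (B *ᵥ y) := by
  funext i
  simp only [mulVec, dotProduct, kroneckerVec, Fintype.sum_prod_type, kroneckerMap_apply,
    Finset.sum_mul_sum]
  exact Finset.sum_congr rfl fun _ _ => Finset.sum_congr rfl fun _ _ => by ring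

theorem pow_mulVec_eq_of_eqOn [Fintype l] [DecidableEq l] [Semiring R] {A A' : Matrix l l R}
    {W : Set (l → R)} (hAA' : ∀ x ∈ W, A *ᵥ x = A' *ᵥ x) (hA' : ∀ x ∈ W, A' *ᵥ x ∈ W) (j : ℕ) :
    ∀ x ∈ W, (A ^ j) *ᵥ x = (A' ^ j) *ᵥ x := by
  induction j with
  | zero => simp
  | succ j ih =>
    intro x hx
    rw [pow_succ, pow_succ, ← mulVec_mulVec, ← mulVec_mulVec, hAA' x hx, ih _ (hA' x hx)]

section KroneckerVecSpan

variable [CommSemiring R]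

def kroneckerVecSpan (V : Submodule R (l → R)) (n : Type*) : Submodule R (l × n → R) :=
  Submodule.span R (Set.image2 (· ⊗ᵥ ·) V Set.univ)

theorem kroneckerVec_mem_kroneckerVecSpan {V : Submodule R (l → R)} {x : l → R} (hx : x ∈ V)
    (y : n → R) : x ⊗ᵥ y ∈ kroneckerVecSpan V n :=
  Submodule.subset_span ⟨x, hx, y, trivial, rfl⟩

variable [Fintype l] [Fintype n]

theorem mulVec_eqOn_kroneckerVecSpan {V : Submodule R (l → R)} {M M' : Matrix (l × n) (l × n) R}
    (h : ∀ x ∈ V, ∀ y, M *ᵥ (x ⊗ᵥ y) = M' *ᵥ (x ⊗ᵥ y)) :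
    ∀ z ∈ kroneckerVecSpan V n, M *ᵥ z = M' *ᵥ z :=
  fun _ hz => LinearMap.eqOn_span (f := M.mulVecLin) (g := M'.mulVecLin)
    (by rintro _ ⟨x, hx, y, -, rfl⟩; exact h x hx y) hz

variable [DecidableEq l]

theorem sum_kronecker_mulVec_of_forall_mulVec_eq_smul {ι : Type*} [Fintype ι]
    (S : ι → Matrix l l R) (B : ι → Matrix n n R) (c : ι → R) {x : l → R}
    (hx : ∀ α, S α *ᵥ x = c α • x) (y : n → R) :
    (∑ α, S α ⊗ₖ B α) *ᵥ (x ⊗ᵥ y) = ((1 : Matrix l l R) ⊗ₖ ∑ α, c α • B α) *ᵥ (x ⊗ᵥ y) := by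
  simp only [sum_mulVec, kronecker_mulVec_kroneckerVec, hx, one_mulVec, smul_mulVec]
  funext i
  simp only [kroneckerVec, Finset.sum_apply, Pi.smul_apply, smul_eq_mul, Finset.mul_sum]
  exact Finset.sum_congr rfl fun _ _ => by ring

variable [DecidableEq n]

theorem kronecker_one_add_one_kronecker_mulVec (A : Matrix l l R) (B : Matrix n n R)
    (x : l → R) (y : n → R) :
    (A ⊗ₖ (1 : Matrix n n R) + (1 : Matrix l l R) ⊗ₖ B) *ᵥ (x ⊗ᵥ y) =
      (A *ᵥ x) ⊗ᵥ y + x ⊗ᵥ (B *ᵥ y) := by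
  rw [add_mulVec, kronecker_mulVec_kroneckerVec, kronecker_mulVec_kroneckerVec, one_mulVec,
    one_mulVec]

theorem kronecker_one_add_one_kronecker_mulVec_mem_kroneckerVecSpan {V : Submodule R (l → R)}
    {A : Matrix l l R} (hA : ∀ x ∈ V, A *ᵥ x ∈ V) (B : Matrix n n R) :
    ∀ z ∈ kroneckerVecSpan V n,
      (A ⊗ₖ (1 : Matrix n n R) + (1 : Matrix l l R) ⊗ₖ B) *ᵥ z ∈ kroneckerVecSpan V n := by
  refine fun z hz => Submodule.span_le (p := (kroneckerVecSpan V n).comap (mulVecLin _)).2 ?_ hz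
  rintro _ ⟨x, hx, y, -, rfl⟩
  rw [SetLike.mem_coe, Submodule.mem_comap, mulVecLin_apply,
    kronecker_one_add_one_kronecker_mulVec]
  exact add_mem (kroneckerVec_mem_kroneckerVecSpan (hA x hx) y)
    (kroneckerVec_mem_kroneckerVecSpan hx (B *ᵥ y))

end KroneckerVecSpan

section KroneckerRingHom

variable (l n R : Type*) [Fintype l] [Fintype n] [DecidableEq l] [DecidableEq n] [CommSemiring R]

def kroneckerOneRingHom : Matrix l l R →+* Matrix (l × n) (l × n) R where
  toFun A := A ⊗ₖ (1 : Matrix n n R)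
  map_one' := one_kronecker_one
  map_mul' A B := by rw [← mul_kronecker_mul, one_mul]
  map_zero' := zero_kronecker _
  map_add' A B := add_kronecker A B 1

def oneKroneckerRingHom : Matrix n n R →+* Matrix (l × n) (l × n) R where
  toFun B := (1 : Matrix l l R) ⊗ₖ B
  map_one' := one_kronecker_one
  map_mul' A B := by rw [← mul_kronecker_mul, one_mul]
  map_zero' := kronecker_zero _
  map_add' A B := kronecker_add _ A B

variable {l n R}

theorem commute_kronecker_one_one_kronecker (A : Matrix l l R) (B : Matrix n n R) :
    Commute (A ⊗ₖ (1 : Matrix n n R)) ((1 : Matrix l l R) ⊗ₖ B) := by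
  rw [Commute, SemiconjBy, ← mul_kronecker_mul, ← mul_kronecker_mul, one_mul, mul_one, one_mul,
    mul_one]

variable [TopologicalSpace R] [IsTopologicalSemiring R]

theorem continuous_kroneckerOneRingHom : Continuous (kroneckerOneRingHom l n R) :=
  continuous_matrix fun i j => (continuous_apply_apply i.1 j.1).mul continuous_const

theorem continuous_oneKroneckerRingHom : Continuous (oneKroneckerRingHom l n R) :=
  continuous_matrix fun i j => continuous_const.mul (continuous_apply_apply i.2 j.2)

end KroneckerRingHom

section Exponential

variable {𝕂 : Type*} [RCLike 𝕂] [Fintype l] [DecidableEq l]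

open scoped Norms.Operator in
theorem hasSum_exp_mulVec (A : Matrix l l 𝕂) (x : l → 𝕂) :
    HasSum (fun j : ℕ => (j.factorial⁻¹ : 𝕂) • (A ^ j) *ᵥ x) (exp A *ᵥ x) := by
  have h := (exp_series_hasSum_exp' (𝕂 := 𝕂) A).map (mulVec.addMonoidHomLeft x)
    (continuous_id.matrix_mulVec continuous_const)
  convert h using 1
  · funext j
    exact (smul_mulVec _ _ _).symm
  · rfl

theorem exp_mulVec_eq_of_eqOn {A A' : Matrix l l 𝕂} {W : Set (l → 𝕂)}
    (hAA' : ∀ x ∈ W, A *ᵥ x = A' *ᵥ x) (hA' : ∀ x ∈ W, A' *ᵥ x ∈ W) {x : l → 𝕂} (hx : x ∈ W) :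
    exp A *ᵥ x = exp A' *ᵥ x := by
  refine (hasSum_exp_mulVec A x).unique ?_
  simpa only [pow_mulVec_eq_of_eqOn hAA' hA' _ x hx] using hasSum_exp_mulVec A' x

variable [Fintype n] [DecidableEq n]

open scoped Norms.Operator in
theorem exp_kronecker_one (A : Matrix l l 𝕂) :
    exp (A ⊗ₖ (1 : Matrix n n 𝕂)) = exp A ⊗ₖ (1 : Matrix n n 𝕂) :=
  (map_exp (kroneckerOneRingHom l n 𝕂) continuous_kroneckerOneRingHom A).symm

open scoped Norms.Operator in
theorem exp_one_kronecker (B : Matrix n n 𝕂) :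
    exp ((1 : Matrix l l 𝕂) ⊗ₖ B) = (1 : Matrix l l 𝕂) ⊗ₖ exp B :=
  (map_exp (oneKroneckerRingHom l n 𝕂) continuous_oneKroneckerRingHom B).symm

theorem exp_kronecker_one_add_one_kronecker (A : Matrix l l 𝕂) (B : Matrix n n 𝕂) :
    exp (A ⊗ₖ (1 : Matrix n n 𝕂) + (1 : Matrix l l 𝕂) ⊗ₖ B) = exp A ⊗ₖ exp B := by
  rw [exp_add_of_commute _ _ (commute_kronecker_one_one_kronecker A B), exp_kronecker_one,
    exp_one_kronecker, ← mul_kronecker_mul, mul_one, one_mul]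

end Exponential

end Matrix

theorem stmt_5_general {n m K : ℕ}
    (HS : Matrix (Fin n) (Fin n) ℂ) (HB : Matrix (Fin m) (Fin m) ℂ)
    (S : Fin K → Matrix (Fin n) (Fin n) ℂ) (B : Fin K → Matrix (Fin m) (Fin m) ℂ)
    (Ht : Submodule ℂ (Fin n → ℂ)) (c : Fin K → ℂ)
    (hc : ∀ α, ∀ k ∈ Ht, (S α).mulVec k = c α • k)
    (hinv : ∀ k ∈ Ht, HS.mulVec k ∈ Ht)
    (t : ℝ) (ψ : Fin n → ℂ) (hψ : ψ ∈ Ht) (μ : Fin m → ℂ) :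
    (NormedSpace.exp ((-(Complex.I * t)) •
        (HS ⊗ₖ (1 : Matrix (Fin m) (Fin m) ℂ) + (1 : Matrix (Fin n) (Fin n) ℂ) ⊗ₖ HB +
          ∑ α, S α ⊗ₖ B α))).mulVec (fun p => ψ p.1 * μ p.2) =
      fun p => ((NormedSpace.exp ((-(Complex.I * t)) • HS)).mulVec ψ) p.1 *
        ((NormedSpace.exp ((-(Complex.I * t)) • (HB + ∑ α, c α • B α))).mulVec μ) p.2 := by
  set s : ℂ := -(Complex.I * t)
  set H := HS ⊗ₖ (1 : Matrix (Fin m) (Fin m) ℂ) + (1 : Matrix (Fin n) (Fin n) ℂ) ⊗ₖ HB +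
    ∑ α, S α ⊗ₖ B α
  set Hc := HB + ∑ α, c α • B α
  have hagree : ∀ k ∈ Ht, ∀ w : Fin m → ℂ, (s • H) *ᵥ (k ⊗ᵥ w) =
      ((s • HS) ⊗ₖ (1 : Matrix (Fin m) (Fin m) ℂ) + (1 : Matrix (Fin n) (Fin n) ℂ) ⊗ₖ (s • Hc))
        *ᵥ (k ⊗ᵥ w) := by
    intro k hk w
    rw [smul_kronecker, kronecker_smul, ← smul_add, smul_mulVec, smul_mulVec, kronecker_add,
      ← add_assoc]
    simp only [H, add_mulVec,
      sum_kronecker_mulVec_of_forall_mulVec_eq_smul S B c fun α => hc α k hk]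
  have hinv' : ∀ k ∈ Ht, (s • HS) *ᵥ k ∈ Ht := fun k hk => by
    rw [smul_mulVec]
    exact Ht.smul_mem s (hinv k hk)
  change _ *ᵥ (ψ ⊗ᵥ μ) = (_ *ᵥ ψ) ⊗ᵥ (_ *ᵥ μ)
  rw [exp_mulVec_eq_of_eqOn (mulVec_eqOn_kroneckerVecSpan hagree)
    (kronecker_one_add_one_kronecker_mulVec_mem_kroneckerVecSpan hinv' _)
    (kroneckerVec_mem_kroneckerVecSpan hψ μ), exp_kronecker_one_add_one_kronecker,
    kronecker_mulVec_kroneckerVec]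

/-- Hamiltonian DFS condition: with `H = H_S ⊗ I + I ⊗ H_B + ∑_α S_α ⊗ B_α`, if all
`k ∈ H̃` satisfy `S_α k = c_α k` and `H_S` leaves `H̃` invariant, then for `ψ ∈ H̃` the
joint evolution factorizes:
`e^{-iHt}(ψ ⊗ μ) = (e^{-iH_S t}ψ) ⊗ (e^{-iH_c t}μ)` with `H_c = H_B + ∑_α c_α B_α`. -/
theorem stmt_5 {n m K : ℕ}
    (HS : Matrix (Fin n) (Fin n) ℂ) (HB : Matrix (Fin m) (Fin m) ℂ)
    (S : Fin K → Matrix (Fin n) (Fin n) ℂ) (B : Fin K → Matrix (Fin m) (Fin m) ℂ)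
    (hHS : HS.IsHermitian) (hHB : HB.IsHermitian)
    (hSh : ∀ α, (S α).IsHermitian) (hBh : ∀ α, (B α).IsHermitian)
    (Ht : Submodule ℂ (Fin n → ℂ)) (c : Fin K → ℂ)
    (hc : ∀ α, ∀ k ∈ Ht, (S α).mulVec k = c α • k)
    (hinv : ∀ k ∈ Ht, HS.mulVec k ∈ Ht)
    (t : ℝ) (ψ : Fin n → ℂ) (hψ : ψ ∈ Ht) (μ : Fin m → ℂ) :
    (NormedSpace.exp ((-(Complex.I * t)) •
        (HS ⊗ₖ (1 : Matrix (Fin m) (Fin m) ℂ) + (1 : Matrix (Fin n) (Fin n) ℂ) ⊗ₖ HB +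
          ∑ α, S α ⊗ₖ B α))).mulVec (fun p => ψ p.1 * μ p.2) =
      fun p => ((NormedSpace.exp ((-(Complex.I * t)) • HS)).mulVec ψ) p.1 *
        ((NormedSpace.exp ((-(Complex.I * t)) • (HB + ∑ α, c α • B α))).mulVec μ) p.2 :=
  stmt_5_general HS HB S B Ht c hc hinv t ψ hψ μ
end

section
/- Consider 3 qubits and the collective operators S_α = ∑_{i=1}^3 σ_i^α for α ∈ {+,-,z}. The four states |½,0,½⟩ = (|010⟩-|100⟩)/√2, |½,0,-½⟩ = (|011⟩-|101⟩)/√2, |½,1,½⟩ = (-2|001⟩+|010⟩+|100⟩)/√6, |½,1,-½⟩ = (2|110⟩-|101⟩-|011⟩)/√6 are orthonormal, and the action of each S_α on the span of {|½,λ,½⟩, |½,λ,-½⟩} preserves it with matrix elements independent of λ ∈ {0,1}; explicitly, S_z|½,λ,±½⟩ = ±|½,λ,±½⟩, S_+|½,λ,-½⟩ = |½,λ,½⟩, S_+|½,λ,½⟩ = 0, S_-|½,λ,½⟩ = |½,λ,-½⟩, S_-|½,λ,-½⟩ = 0. -/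
/-!
On a computational basis state the collective operator
`S_A = A ⊗ 1 ⊗ 1 + 1 ⊗ A ⊗ 1 + 1 ⊗ 1 ⊗ A` acts one qubit at a time: `S_z` multiplies it by
(number of 0s) − (number of 1s), and `S_±` is the sum of the single-qubit raisings/lowerings.
The states `|½,λ,±½⟩` are integer combinations of the basis states with one or two 1s, so by
linearity every claim reduces to the action of `S_A` on these six basis states, and
orthonormality to the normalisations `(1/√2)² · 2 = 1` and `(1/√6)² · 6 = 1`.
-/

open Matrix

/-- The operator acting as the one-qubit operator `A` on the `i`-th tensor factor of
`(ℂ²)^{⊗N}` (realized as functions `(Fin N → Fin 2) → ℂ`) and as identity elsewhere. -/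
noncomputable def liftOp {N : ℕ} (i : Fin N) (A : Matrix (Fin 2) (Fin 2) ℂ) :
    Matrix (Fin N → Fin 2) (Fin N → Fin 2) ℂ :=
  fun x y => A (x i) (y i) * ∏ j ∈ Finset.univ.erase i, (if x j = y j then (1 : ℂ) else 0)

/-- `σ^z = |0⟩⟨0| - |1⟩⟨1|`. -/
noncomputable def sigmaz : Matrix (Fin 2) (Fin 2) ℂ := !![1, 0; 0, -1]

/-- `σ^+ = |0⟩⟨1|`. -/
noncomputable def sigmap : Matrix (Fin 2) (Fin 2) ℂ := !![0, 1; 0, 0]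

/-- `σ^- = |1⟩⟨0|`. -/
noncomputable def sigmam : Matrix (Fin 2) (Fin 2) ℂ := !![0, 0; 1, 0]

/-- Collective spin operator `S_A = ∑ᵢ A_i` on `N` qubits. -/
noncomputable def Scoll {N : ℕ} (A : Matrix (Fin 2) (Fin 2) ℂ) :
    Matrix (Fin N → Fin 2) (Fin N → Fin 2) ℂ :=
  ∑ i : Fin N, liftOp i A

/-- The computational basis state `|abc⟩` of 3 qubits. -/
noncomputable def ket3 (a b c : Fin 2) : (Fin 3 → Fin 2) → ℂ :=
  fun f => if f = ![a, b, c] then 1 else 0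

/-- The four `J = 1/2` states `|½, λ, μ⟩` of three qubits: `dfs3 λ μ` where `λ ∈ {0,1}` is
the degeneracy (subsystem) label and `μ = 0, 1` corresponds to `m_J = +½, -½`. -/
noncomputable def dfs3 : Fin 2 → Fin 2 → ((Fin 3 → Fin 2) → ℂ)
  | 0, 0 => ((1 / Real.sqrt 2 : ℝ) : ℂ) • (ket3 0 1 0 - ket3 1 0 0)
  | 0, 1 => ((1 / Real.sqrt 2 : ℝ) : ℂ) • (ket3 0 1 1 - ket3 1 0 1)
  | 1, 0 => ((1 / Real.sqrt 6 : ℝ) : ℂ) • ((-2 : ℂ) • ket3 0 0 1 + ket3 0 1 0 + ket3 1 0 0)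
  | 1, 1 => ((1 / Real.sqrt 6 : ℝ) : ℂ) • ((2 : ℂ) • ket3 1 1 0 - ket3 1 0 1 - ket3 0 1 1)

theorem liftOp_mulVec_single {N : ℕ} (i : Fin N) (A : Matrix (Fin 2) (Fin 2) ℂ)
    (y : Fin N → Fin 2) :
    liftOp i A *ᵥ Pi.single y 1 = ∑ b, A b (y i) • Pi.single (Function.update y i b) 1 := by
  ext x
  simp only [liftOp, mulVec_single_one, col_apply, Finset.sum_apply, Pi.smul_apply,
    Pi.single_apply, Function.eq_update_iff, ite_and, smul_eq_mul, mul_ite, mul_zero,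
    Finset.sum_ite_eq, Finset.mem_univ, if_true, Finset.prod_boole, Finset.mem_erase, ne_eq,
    and_true]

theorem scoll_mulVec_single {N : ℕ} (A : Matrix (Fin 2) (Fin 2) ℂ) (y : Fin N → Fin 2) :
    Scoll A *ᵥ Pi.single y 1 = ∑ i, ∑ b, A b (y i) • Pi.single (Function.update y i b) 1 := by
  simp only [Scoll, sum_mulVec, liftOp_mulVec_single]

theorem ket3_eq_single (a b c : Fin 2) : ket3 a b c = Pi.single ![a, b, c] 1 := by
  ext f
  simp [ket3, Pi.single_apply]

theorem scoll_mulVec_ket3 (A : Matrix (Fin 2) (Fin 2) ℂ) (a b c : Fin 2) :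
    Scoll A *ᵥ ket3 a b c =
      ∑ a', A a' a • ket3 a' b c + ∑ b', A b' b • ket3 a b' c + ∑ c', A c' c • ket3 a b c' := by
  have h0 : ∀ x, Function.update ![a, b, c] 0 x = ![x, b, c] := fun x => by
    funext i; fin_cases i <;> rfl
  have h1 : ∀ x, Function.update ![a, b, c] 1 x = ![a, x, c] := fun x => by
    funext i; fin_cases i <;> rfl
  have h2 : ∀ x, Function.update ![a, b, c] 2 x = ![a, b, x] := fun x => by
    funext i; fin_cases i <;> rfl
  simp only [ket3_eq_single, scoll_mulVec_single, Fin.sum_univ_three, h0, h1, h2,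
    cons_val_zero, cons_val_one, cons_val_two, head_cons, tail_cons]

theorem star_ket3_dotProduct_ket3 (a b c a' b' c' : Fin 2) :
    star (ket3 a b c) ⬝ᵥ ket3 a' b' c' = if a = a' ∧ b = b' ∧ c = c' then 1 else 0 := by
  simp [ket3_eq_single, dotProduct_single, Pi.single_apply, eq_comm]

theorem scoll_mulVec_dfs3 (lam : Fin 2) :
    Scoll sigmaz *ᵥ dfs3 lam 0 = dfs3 lam 0 ∧ Scoll sigmaz *ᵥ dfs3 lam 1 = -dfs3 lam 1 ∧
      Scoll sigmap *ᵥ dfs3 lam 1 = dfs3 lam 0 ∧ Scoll sigmap *ᵥ dfs3 lam 0 = 0 ∧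
      Scoll sigmam *ᵥ dfs3 lam 0 = dfs3 lam 1 ∧ Scoll sigmam *ᵥ dfs3 lam 1 = 0 := by
  fin_cases lam <;> refine ⟨?_, ?_, ?_, ?_, ?_, ?_⟩ <;>
    simp only [dfs3, mulVec_smul, mulVec_add, mulVec_sub, mulVec_neg, scoll_mulVec_ket3,
      Fin.sum_univ_two, sigmaz, sigmap, sigmam, of_apply, cons_val', cons_val_zero, cons_val_one,
      cons_val_fin_one, one_smul, zero_smul, neg_smul, add_zero, zero_add] <;>
    module

theorem dfs3_orthonormal (lam mu lam' mu' : Fin 2) :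
    star (dfs3 lam mu) ⬝ᵥ dfs3 lam' mu' = if lam = lam' ∧ mu = mu' then 1 else 0 := by
  have h2 : ((1 / √2 : ℝ) : ℂ) * ((1 / √2 : ℝ) : ℂ) = 1 / 2 := by
    rw [← Complex.ofReal_mul, one_div_mul_one_div, Real.mul_self_sqrt zero_le_two]; norm_num
  have h6 : ((1 / √6 : ℝ) : ℂ) * ((1 / √6 : ℝ) : ℂ) = 1 / 6 := by
    rw [← Complex.ofReal_mul, one_div_mul_one_div, Real.mul_self_sqrt (by norm_num)]; norm_num
  fin_cases lam <;> fin_cases mu <;> fin_cases lam' <;> fin_cases mu' <;>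
    simp only [dfs3, star_smul, star_add, star_sub, Complex.star_def, Complex.conj_ofReal,
      map_neg, Complex.conj_ofNat, smul_dotProduct, dotProduct_smul, add_dotProduct,
      dotProduct_add, sub_dotProduct, dotProduct_sub, star_ket3_dotProduct_ket3, Fin.isValue,
      Fin.zero_eta, Fin.mk_one, one_ne_zero, zero_ne_one, and_self, and_true, and_false,
      ↓reduceIte, smul_eq_mul] <;>
    first | linear_combination 2 * h2 | linear_combination 6 * h6 | ring

/-- The four states `|½, λ, ±½⟩` are orthonormal, and the collective operators
`S_z, S_+, S_-` act on the span of `{|½,λ,½⟩, |½,λ,-½⟩}` with matrix elements independent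
of the degeneracy label `λ`:
`S_z|½,λ,±½⟩ = ±|½,λ,±½⟩`, `S_+|½,λ,-½⟩ = |½,λ,½⟩`, `S_+|½,λ,½⟩ = 0`,
`S_-|½,λ,½⟩ = |½,λ,-½⟩`, `S_-|½,λ,-½⟩ = 0`. -/
theorem stmt_19 :
    (∀ lam mu lam' mu' : Fin 2,
      star (dfs3 lam mu) ⬝ᵥ dfs3 lam' mu' =
        if lam = lam' ∧ mu = mu' then 1 else 0) ∧
    (∀ lam : Fin 2,
      (Scoll (N := 3) sigmaz).mulVec (dfs3 lam 0) = dfs3 lam 0 ∧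
      (Scoll (N := 3) sigmaz).mulVec (dfs3 lam 1) = -dfs3 lam 1 ∧
      (Scoll (N := 3) sigmap).mulVec (dfs3 lam 1) = dfs3 lam 0 ∧
      (Scoll (N := 3) sigmap).mulVec (dfs3 lam 0) = 0 ∧
      (Scoll (N := 3) sigmam).mulVec (dfs3 lam 0) = dfs3 lam 1 ∧
      (Scoll (N := 3) sigmam).mulVec (dfs3 lam 1) = 0) :=
  ⟨dfs3_orthonormal, scoll_mulVec_dfs3⟩
end
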